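/- arXiv:2302.02639 — 2 statements merged into one kernel-verified Lean document; each statement's English description precedes it below -/
import Mathlib

section
/- Let M be an n×n self-adjoint positive semi-definite complex matrix with constant diagonal, M_{j,j} = c for all j. Then the matrix with entries |M_{j,k}|² − c²/n is positive semi-definite. -/
/-!
Factor `M = Aᴴ A` and, for a vector `x`, put `B = A · diag x · Aᴴ`. Then
`x⋆ (M ∘ M̄) x = tr (Bᴴ B) = ∑ |B l i|²`, while `tr B = ∑ x j * M j j = c ∑ x j`.
Cauchy–Schwarz on the diagonal of `B` gives `|tr B|² ≤ n ∑ |B i i|² ≤ n tr (Bᴴ B)`, i.e.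
`x⋆ (M ∘ M̄) x ≥ c² |∑ x j|² / n`.
-/

open scoped ComplexOrder

namespace Matrix

variable {𝕜 ι : Type*} [RCLike 𝕜] [Fintype ι]

lemma trace_conjTranspose_mul_self_eq_sum_norm_sq (B : Matrix ι ι 𝕜) :
    (Bᴴ * B).trace = ((∑ i, ∑ l, ‖B l i‖ ^ 2 : ℝ) : 𝕜) := by
  simp only [trace, diag_apply, mul_apply, conjTranspose_apply, RCLike.star_def, RCLike.conj_mul]
  push_cast
  rfl

lemma norm_trace_sq_div_card_le_sum_norm_sq (B : Matrix ι ι 𝕜) :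
    ‖B.trace‖ ^ 2 / Fintype.card ι ≤ ∑ i, ∑ l, ‖B l i‖ ^ 2 := by
  refine div_le_of_le_mul₀ (Nat.cast_nonneg _) (by positivity) ?_
  calc ‖B.trace‖ ^ 2 ≤ (∑ i, ‖B i i‖) ^ 2 := by gcongr; exact norm_sum_le _ _
    _ ≤ Fintype.card ι * ∑ i, ‖B i i‖ ^ 2 := sq_sum_le_card_mul_sum_sq
    _ ≤ Fintype.card ι * ∑ i, ∑ l, ‖B l i‖ ^ 2 := by
      gcongr with i
      exact Finset.single_le_sum (f := fun l => ‖B l i‖ ^ 2) (fun _ _ => by positivity)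
        (Finset.mem_univ i)
    _ = (∑ i, ∑ l, ‖B l i‖ ^ 2) * Fintype.card ι := mul_comm _ _

lemma norm_trace_sq_div_card_le_trace_conjTranspose_mul_self (B : Matrix ι ι 𝕜) :
    ((‖B.trace‖ ^ 2 / Fintype.card ι : ℝ) : 𝕜) ≤ (Bᴴ * B).trace := by
  rw [trace_conjTranspose_mul_self_eq_sum_norm_sq, RCLike.ofReal_le_ofReal]
  exact norm_trace_sq_div_card_le_sum_norm_sq B

lemma star_dotProduct_hadamard_transpose_mulVec [DecidableEq ι] (M : Matrix ι ι 𝕜)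
    (x : ι → 𝕜) :
    star x ⬝ᵥ (M ⊙ Mᵀ) *ᵥ x = (diagonal (star x) * M * diagonal x * M).trace := by
  simp only [dotProduct, mulVec, trace, diag_apply,
    mul_apply (M := diagonal (star x) * M * diagonal x), mul_diagonal, diagonal_mul,
    hadamard_apply, transpose_apply, Finset.mul_sum]
  refine Finset.sum_congr rfl fun j _ => Finset.sum_congr rfl fun k _ => ?_
  ring

lemma PosSemidef.norm_sum_mul_diag_sq_div_card_le {M : Matrix ι ι 𝕜} (hM : M.PosSemidef)
    (x : ι → 𝕜) :
    ((‖∑ j, x j * M j j‖ ^ 2 / Fintype.card ι : ℝ) : 𝕜) ≤ star x ⬝ᵥ (M ⊙ Mᵀ) *ᵥ x := by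
  classical
  obtain ⟨A, rfl⟩ : ∃ A : Matrix ι ι 𝕜, M = Aᴴ * A := by
    open scoped MatrixOrder in
    exact CStarAlgebra.nonneg_iff_eq_star_mul_self.mp hM.nonneg
  set B := A * diagonal x * Aᴴ
  have htrace : B.trace = ∑ j, x j * (Aᴴ * A) j j := by
    rw [trace_mul_cycle]
    simp only [trace, diag_apply, mul_diagonal]
    exact Finset.sum_congr rfl fun j _ => mul_comm _ _
  have hform : (Bᴴ * B).trace = star x ⬝ᵥ ((Aᴴ * A) ⊙ (Aᴴ * A)ᵀ) *ᵥ x := by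
    rw [star_dotProduct_hadamard_transpose_mulVec]
    simp only [B, conjTranspose_mul, conjTranspose_conjTranspose, diagonal_conjTranspose,
      Matrix.mul_assoc]
    rw [trace_mul_comm]
    simp only [Matrix.mul_assoc]
  rw [← htrace, ← hform]
  exact norm_trace_sq_div_card_le_trace_conjTranspose_mul_self B

lemma star_dotProduct_of_const_mulVec (a : 𝕜) (x : ι → 𝕜) :
    star x ⬝ᵥ (of fun _ _ : ι => a) *ᵥ x = a * ((‖∑ j, x j‖ ^ 2 : ℝ) : 𝕜) := by
  simp only [dotProduct, mulVec, of_apply, Pi.star_apply, RCLike.star_def, ← Finset.mul_sum,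
    ← Finset.sum_mul, ← map_sum]
  push_cast
  rw [← RCLike.conj_mul]
  ring

theorem PosSemidef.posSemidef_norm_sq_sub_of_diag_eq {M : Matrix ι ι 𝕜} (hM : M.PosSemidef)
    {c : ℝ} (hdiag : ∀ j, M j j = c) :
    (of fun j k => ((‖M j k‖ ^ 2 - c ^ 2 / Fintype.card ι : ℝ) : 𝕜)).PosSemidef := by
  have hentries : (of fun j k => ((‖M j k‖ ^ 2 - c ^ 2 / Fintype.card ι : ℝ) : 𝕜)) =
      M ⊙ Mᵀ - of fun _ _ => ((c ^ 2 / Fintype.card ι : ℝ) : 𝕜) := by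
    ext j k
    rw [of_apply, sub_apply, hadamard_apply, transpose_apply, of_apply, ← hM.1.apply k j,
      RCLike.star_def, RCLike.mul_conj, RCLike.ofReal_sub, RCLike.ofReal_pow]
  refine .of_dotProduct_mulVec_nonneg ?_ fun x => ?_
  · ext j k
    rw [conjTranspose_apply, of_apply, of_apply, RCLike.star_def, RCLike.conj_ofReal,
      ← hM.1.apply j k, norm_star]
  · have hbound := hM.norm_sum_mul_diag_sq_div_card_le x
    simp only [hdiag, ← Finset.sum_mul, norm_mul, RCLike.norm_ofReal, mul_pow, sq_abs] at hbound
    rw [hentries, sub_mulVec, dotProduct_sub, star_dotProduct_of_const_mulVec, sub_nonneg,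
      ← RCLike.ofReal_mul]
    convert hbound using 2
    ring

end Matrix

/-- If `M` is self-adjoint positive semi-definite with constant diagonal `c`, then the matrix
with entries `|M j k|^2 - c^2/n` is positive semi-definite. -/
theorem schur_variant_const_diag (n : ℕ) (M : Matrix (Fin n) (Fin n) ℂ)
    (hM : M.PosSemidef) (c : ℝ) (hdiag : ∀ j, M j j = (c : ℂ)) :
    Matrix.PosSemidef (Matrix.of fun j k : Fin n =>
      ((‖M j k‖) ^ 2 : ℂ) - (c ^ 2 / n : ℂ)) := by
  simpa using hM.posSemidef_norm_sq_sub_of_diag_eq hdiag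
end

section
/- Let H be a RKHS on D with kernel K that can be written as K(x,y) = ∑_{i=1}^m |M_i(x,y)|², where each M_i is a positive semi-definite function on D×D that is constant on the diagonal, M_i(x,x) = c_i. Assume the constant function 1 belongs to H and let S be the functional f ↦ ⟨f,1⟩. Then e_n(H,S)² ≥ ‖1‖²_H − n/κ, where κ = ∑_i c_i² = K(x,x). -/
open scoped ComplexOrder

/-! For `g = ∑ₖ conj aₖ • K(xₖ,·)` and `s = ∑ₖ aₖ` one has
`‖g - 1‖² = ‖g‖² - 2 Re s + ‖1‖²` and `‖g‖² = ∑ᵢ ∑ⱼₖ conj aⱼ aₖ |Mᵢ(xⱼ,xₖ)|²`.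
Factoring the Gram matrix `(Mᵢ(xⱼ,xₖ))ⱼₖ = Cᴴ C`, the `i`-th summand is the squared
Frobenius norm of `T = C diag(conj a) Cᴴ`, whose trace is `cᵢ conj s`.
As `|tr T|² ≤ n ‖T‖²_F`, this gives `κ |s|² ≤ n ‖g‖²`, and minimising `‖g‖² - 2 Re s`
under that constraint leaves `-n/κ`. -/

open Matrix

namespace Matrix

variable {n : Type*} [Fintype n]

theorem norm_trace_sq_le_card_mul_sum_norm_sq {𝕜 : Type*} [RCLike 𝕜] (T : Matrix n n 𝕜) :
    ‖T.trace‖ ^ 2 ≤ Fintype.card n * ∑ i, ∑ j, ‖T i j‖ ^ 2 :=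
  calc ‖T.trace‖ ^ 2 ≤ (∑ i, ‖T i i‖) ^ 2 := by
        gcongr; exact norm_sum_le _ _
    _ ≤ Fintype.card n * ∑ i, ‖T i i‖ ^ 2 := sq_sum_le_card_mul_sum_sq
    _ ≤ Fintype.card n * ∑ i, ∑ j, ‖T i j‖ ^ 2 := by
        gcongr with i
        exact Finset.single_le_sum (f := fun j => ‖T i j‖ ^ 2) (fun _ _ => by positivity)
          (Finset.mem_univ i)

theorem trace_mul_conjTranspose_self_eq_sum_norm_sq {m : Type*} [Fintype m]
    (T : Matrix m n ℂ) : (T * Tᴴ).trace = ∑ i, ∑ j, (‖T i j‖ ^ 2 : ℂ) := by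
  simp [trace, mul_apply, Complex.mul_conj, Complex.normSq_eq_norm_sq]

theorem IsHermitian.sum_conj_mul_mul_norm_sq_eq_trace [DecidableEq n] {B : Matrix n n ℂ}
    (hB : B.IsHermitian) (a : n → ℂ) :
    ∑ j, ∑ k, starRingEnd ℂ (a j) * a k * (‖B j k‖ ^ 2 : ℂ) =
      (diagonal (star a) * B * diagonal a * B).trace := by
  refine Finset.sum_congr rfl fun j _ => ?_
  rw [diag_apply, mul_apply]
  refine Finset.sum_congr rfl fun k _ => ?_
  rw [mul_diagonal, diagonal_mul, ← hB.apply k j, ← Complex.mul_conj']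
  simp only [Pi.star_apply, RCLike.star_def]
  ring

open scoped MatrixOrder in
theorem PosSemidef.sq_mul_norm_sum_sq_le [DecidableEq n] {B : Matrix n n ℂ} (hB : B.PosSemidef)
    {c : ℝ} (hdiag : ∀ j, B j j = c) (a : n → ℂ) :
    c ^ 2 * ‖∑ j, a j‖ ^ 2 ≤
      Fintype.card n * (∑ j, ∑ k, starRingEnd ℂ (a j) * a k * (‖B j k‖ ^ 2 : ℂ)).re := by
  obtain ⟨C, rfl⟩ := CStarAlgebra.nonneg_iff_eq_star_mul_self.mp hB.nonneg
  rw [star_eq_conjTranspose] at hB hdiag ⊢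
  set T := C * diagonal (star a) * Cᴴ
  have hform : ∑ j, ∑ k, starRingEnd ℂ (a j) * a k * (‖(Cᴴ * C) j k‖ ^ 2 : ℂ) =
      ∑ p, ∑ q, (‖T p q‖ ^ 2 : ℂ) := by
    rw [hB.isHermitian.sum_conj_mul_mul_norm_sq_eq_trace,
      ← trace_mul_conjTranspose_self_eq_sum_norm_sq]
    simp only [T, conjTranspose_mul, conjTranspose_conjTranspose, diagonal_conjTranspose,
      star_star, Matrix.mul_assoc]
    rw [trace_mul_comm C]
    simp only [Matrix.mul_assoc]
  have htrace : T.trace = c * starRingEnd ℂ (∑ j, a j) := by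
    rw [trace_mul_comm, ← Matrix.mul_assoc, trace, map_sum, Finset.mul_sum]
    simp [hdiag]
  calc c ^ 2 * ‖∑ j, a j‖ ^ 2 = ‖T.trace‖ ^ 2 := by
        rw [htrace, norm_mul, Complex.norm_real, Complex.norm_conj, Real.norm_eq_abs, mul_pow,
          sq_abs]
    _ ≤ Fintype.card n * ∑ p, ∑ q, ‖T p q‖ ^ 2 := norm_trace_sq_le_card_mul_sum_norm_sq T
    _ = _ := by rw [hform]; norm_cast

end Matrix

theorem inner_sum_conj_smul_self {ι 𝕜 E : Type*} [Fintype ι] [RCLike 𝕜]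
    [NormedAddCommGroup E] [InnerProductSpace 𝕜 E] (v : ι → E) (a : ι → 𝕜) :
    inner 𝕜 (∑ k, starRingEnd 𝕜 (a k) • v k) (∑ k, starRingEnd 𝕜 (a k) • v k) =
      ∑ j, ∑ k, starRingEnd 𝕜 (a j) * a k * inner 𝕜 (v k) (v j) := by
  simp only [sum_inner, inner_sum, inner_smul_left, inner_smul_right, RCLike.conj_conj,
    Finset.mul_sum]
  refine Finset.sum_congr rfl fun j _ => Finset.sum_congr rfl fun k _ => ?_
  ring

theorem neg_div_le_sub_two_mul_of_mul_sq_le {κ ν G r t : ℝ} (hκ : 0 < κ) (hν : 0 ≤ ν)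
    (hG : 0 ≤ G) (hr : r ≤ t) (h : κ * t ^ 2 ≤ ν * G) : -(ν / κ) ≤ G - 2 * r := by
  rw [neg_le, le_div_iff₀ hκ]
  rcases hν.eq_or_lt with rfl | hν
  · have ht : t ^ 2 ≤ 0 := nonpos_of_mul_nonpos_right (by simpa using h) hκ
    nlinarith [pow_eq_zero_iff two_ne_zero |>.mp (ht.antisymm (sq_nonneg t))]
  · nlinarith [sq_nonneg (κ * t - ν), mul_le_mul_of_nonneg_left h hκ.le,
      mul_le_mul_of_nonneg_left hr (mul_pos hκ hν).le]

theorem sum_of_squares_quadrature_lower_bound_general {D H : Type*} [Nonempty D]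
    [NormedAddCommGroup H] [InnerProductSpace ℂ H]
    (K : D → D → ℂ) (rep : D → H)
    (hK : ∀ x y, K x y = (inner ℂ (rep y) (rep x) : ℂ))
    (m : ℕ) (M : Fin m → D → D → ℂ) (c : Fin m → ℝ)
    (hpsd : ∀ (i : Fin m) (N : ℕ) (x : Fin N → D),
      Matrix.PosSemidef (Matrix.of fun j k : Fin N => M i (x j) (x k)))
    (hdiag : ∀ i x, M i x x = (c i : ℂ))
    (hsum : ∀ x y, K x y = ∑ i, ((‖M i x y‖) ^ 2 : ℂ))
    (one : H) (hone : ∀ x, (inner ℂ (rep x) one : ℂ) = 1)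
    (κ : ℝ) (hκ : κ = ∑ i, (c i) ^ 2) (n : ℕ) :
    ‖one‖ ^ 2 - n / κ ≤ ⨅ (x : Fin n → D) (a : Fin n → ℂ),
      ‖(∑ k, (starRingEnd ℂ) (a k) • rep (x k)) - one‖ ^ 2 := by
  obtain ⟨x₀⟩ := ‹Nonempty D›
  have hκ_pos : 0 < κ := by
    have hκK : (κ : ℂ) = K x₀ x₀ := by
      simp [hsum, hdiag, hκ, Complex.norm_real, ← Complex.ofReal_pow]
    rw [hK, inner_self_eq_norm_sq_to_K, ← RCLike.ofReal_pow] at hκK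
    have : rep x₀ ≠ 0 := fun h => by simpa [h] using hone x₀
    rw [RCLike.ofReal_injective hκK]
    positivity
  refine le_ciInf fun x => le_ciInf fun a => ?_
  set g := ∑ k, starRingEnd ℂ (a k) • rep (x k)
  have hg_one : inner ℂ g one = ∑ k, a k := by simp [g, hone]
  have hg_sq : ‖g‖ ^ 2 =
      ∑ i, (∑ j, ∑ k, starRingEnd ℂ (a j) * a k * (‖M i (x j) (x k)‖ ^ 2 : ℂ)).re := by
    rw [← inner_self_eq_norm_sq (𝕜 := ℂ), inner_sum_conj_smul_self, ← Complex.re_sum]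
    simp_rw [← hK, hsum, Finset.mul_sum]
    exact congrArg _ ((Finset.sum_congr rfl fun _ _ => Finset.sum_comm).trans Finset.sum_comm)
  have hbound : κ * ‖∑ k, a k‖ ^ 2 ≤ n * ‖g‖ ^ 2 := by
    rw [hκ, hg_sq, Finset.sum_mul, Finset.mul_sum]
    refine Finset.sum_le_sum fun i _ => ?_
    simpa only [Fintype.card_fin, of_apply] using
      (hpsd i n x).sq_mul_norm_sum_sq_le (fun j => hdiag i (x j)) a
  rw [norm_sub_sq (𝕜 := ℂ), hg_one]
  linarith [neg_div_le_sub_two_mul_of_mul_sq_le hκ_pos n.cast_nonneg (sq_nonneg ‖g‖)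
    (RCLike.re_le_norm _) hbound]

/-- If the kernel of an RKHS `H` on `D` (with `rep x = K(x,·)`, `f(x) = ⟪rep x, f⟫`,
`K x y = ⟪rep y, rep x⟫`) is a sum of squares `K(x,y) = ∑ᵢ |Mᵢ(x,y)|²` of positive
semi-definite functions with constant diagonals `Mᵢ(x,x) = cᵢ`, and `1 ∈ H`, then for the
functional `S(f) = ⟨f,1⟩` one has `e_n(H,S)² ≥ ‖1‖² - n/κ` with `κ = ∑ᵢ cᵢ²`. -/
theorem sum_of_squares_quadrature_lower_bound {D H : Type*} [Nonempty D]
    [NormedAddCommGroup H] [InnerProductSpace ℂ H] [CompleteSpace H]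
    (K : D → D → ℂ) (rep : D → H)
    (hK : ∀ x y, K x y = (inner ℂ (rep y) (rep x) : ℂ))
    (m : ℕ) (M : Fin m → D → D → ℂ) (c : Fin m → ℝ)
    (hpsd : ∀ (i : Fin m) (N : ℕ) (x : Fin N → D),
      Matrix.PosSemidef (Matrix.of fun j k : Fin N => M i (x j) (x k)))
    (hdiag : ∀ i x, M i x x = (c i : ℂ))
    (hsum : ∀ x y, K x y = ∑ i, ((‖M i x y‖) ^ 2 : ℂ))
    (one : H) (hone : ∀ x, (inner ℂ (rep x) one : ℂ) = 1)
    (κ : ℝ) (hκ : κ = ∑ i, (c i) ^ 2) (n : ℕ) :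
    ‖one‖ ^ 2 - n / κ ≤ ⨅ (x : Fin n → D) (a : Fin n → ℂ),
      ‖(∑ k, (starRingEnd ℂ) (a k) • rep (x k)) - one‖ ^ 2 :=
  sum_of_squares_quadrature_lower_bound_general K rep hK m M c hpsd hdiag hsum one hone κ hκ n
end
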